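/- arXiv:math/0504486 — 6 statements merged into one kernel-verified Lean document; each statement's English description precedes it below -/
import Mathlib

section
/- Let d ≥ 1 and let f : ℤ → ℚ be a function given by a polynomial of degree at most d. Suppose that f(m−1) = (−1)^d · f(−m) for every integer m. Define the power series D(X) = (1−X)^{d+1} · Σ_{m≥0} f(m) X^m in ℚ[[X]]. Then D is a polynomial of degree at most d, and its coefficients satisfy D_i = D_{d−i} for every 0 ≤ i ≤ d. -/
/-!
The coefficient `D_n` is the partial sum `∑_{j ≤ n} (-1)^j C(d+1, j) f(n - j)` of the
`(d+1)`-st backward difference of `f` at `n`. Since `f` is polynomial of degree `≤ d`, the full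
backward difference vanishes at every integer; hence `D_n = 0` for `n > d`. For `n ≤ d`, `D_n` is
minus the tail `j > n` of the full sum, and reflecting `j ↦ d + 1 - j` and applying the
functional equation of `f` turns that tail into `-D_{d-n}`.
-/

open Finset PowerSeries
open scoped Polynomial

section
variable {R : Type*} [CommRing R]

theorem PowerSeries.coeff_one_sub_X_pow (n i : ℕ) :
    coeff i ((1 - X : R⟦X⟧) ^ n) = (-1) ^ i * n.choose i := by
  have : (1 - X : R⟦X⟧) ^ n = rescale (-1) (((1 + Polynomial.X) ^ n : R[X]) : R⟦X⟧) := by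
    simp [sub_eq_add_neg]
  rw [this, coeff_rescale, Polynomial.coeff_coe, Polynomial.coeff_one_add_X_pow]

def truncBackwardDiff (k : ℕ) (g : ℤ → R) (n : ℕ) : R :=
  ∑ j ∈ range (k + 1) with j ≤ n, (-1) ^ j * k.choose j * g (n - j)

theorem coeff_one_sub_X_pow_mul_mk (k n : ℕ) (g : ℤ → R) :
    coeff n ((1 - X : R⟦X⟧) ^ k * PowerSeries.mk fun m : ℕ => g m) = truncBackwardDiff k g n := by
  have hsupp : ∑ j ∈ range (n + 1) with j ≤ k, (-1) ^ j * k.choose j * g (n - j) =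
      ∑ j ∈ range (n + 1), (-1) ^ j * k.choose j * g (n - j) :=
    sum_filter_of_ne fun j _ hj => by
      by_contra hjk
      simp [Nat.choose_eq_zero_of_lt (not_le.mp hjk)] at hj
  have hfilter : {j ∈ range (k + 1) | j ≤ n} = {j ∈ range (n + 1) | j ≤ k} := by
    ext j; simp only [mem_filter, mem_range]; omega
  rw [coeff_mul, Nat.sum_antidiagonal_eq_sum_range_succ_mk, truncBackwardDiff, hfilter, hsupp]
  refine sum_congr rfl fun j hj => ?_
  rw [mem_range] at hj
  rw [coeff_one_sub_X_pow, coeff_mk, Nat.cast_sub (by omega)]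

theorem truncBackwardDiff_of_le {k n : ℕ} (hkn : k ≤ n) (g : ℤ → R) :
    truncBackwardDiff k g n = ∑ j ∈ range (k + 1), (-1) ^ j * k.choose j * g (n - j) := by
  rw [truncBackwardDiff, filter_true_of_mem fun j hj => by rw [mem_range] at hj; omega]

theorem Polynomial.sum_range_choose_mul_eval_sub_eq_zero {p : R[X]} {k : ℕ}
    (hp : p.natDegree < k) (x : R) :
    ∑ j ∈ range (k + 1), (-1) ^ j * k.choose j * p.eval (x - j) = 0 := by
  have h := congrFun (Polynomial.fwdDiff_iter_eq_zero_of_degree_lt hp) (x - k)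
  rw [fwdDiff_iter_eq_sum_shift, ← sum_range_reflect, Pi.zero_apply] at h
  rw [← h]
  refine sum_congr rfl fun j hj => ?_
  have hj : j ≤ k := by rw [mem_range] at hj; omega
  rw [add_tsub_cancel_right, Nat.sub_sub_self hj, Nat.choose_symm hj, zsmul_eq_mul, nsmul_one,
    Nat.cast_sub hj]
  push_cast
  ring_nf

theorem truncBackwardDiff_symm {d i : ℕ} (hi : i ≤ d) {g : ℤ → R}
    (hback : ∀ n : ℤ, ∑ j ∈ range (d + 2), (-1) ^ j * (d + 1).choose j * g (n - j) = 0)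
    (hsym : ∀ m : ℤ, g (m - 1) = (-1) ^ d * g (-m)) :
    truncBackwardDiff (d + 1) g i = truncBackwardDiff (d + 1) g (d - i) := by
  have htail : ∑ j ∈ range (d + 2) with ¬j ≤ i, (-1) ^ j * (d + 1).choose j * g (i - j) =
      -truncBackwardDiff (d + 1) g (d - i) := by
    rw [truncBackwardDiff, sum_filter, sum_filter, ← sum_range_reflect, ← sum_neg_distrib]
    refine sum_congr rfl fun j hj => ?_
    rw [mem_range] at hj
    rw [show d + 2 - 1 - j = d + 1 - j by omega]
    by_cases hji : j ≤ d - i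
    · have hsign : (-1 : R) ^ (d + 1 - j) * (-1) ^ d = -(-1) ^ j := by
        rw [← pow_add, show d + 1 - j + d = j + 2 * (d - j) + 1 by omega, pow_add, pow_add,
          pow_mul, neg_one_sq, one_pow, mul_one, pow_one, mul_neg_one]
      have hg : g (i - (d + 1 - j : ℕ)) = (-1) ^ d * g ((d - i : ℕ) - j) := by
        rw [show ((i : ℤ) - (d + 1 - j : ℕ)) = (i - d + j) - 1 by omega, hsym]
        congr 2; omega
      rw [if_pos (by omega), if_pos hji, hg, Nat.choose_symm (by omega)]
      linear_combination ((d + 1).choose j * g ((d - i : ℕ) - j)) * hsign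
    · rw [if_neg (by omega), if_neg hji, neg_zero]
  have hsplit := sum_filter_add_sum_filter_not (range (d + 2)) (· ≤ i)
    fun j => (-1) ^ j * ((d + 1).choose j : R) * g (i - j)
  rw [hback, htail, ← truncBackwardDiff] at hsplit
  exact add_neg_eq_zero.mp hsplit

end

theorem stmt_0_general (d : ℕ) (f : ℤ → ℚ) (p : Polynomial ℚ)
    (hdeg : p.natDegree ≤ d) (hf : ∀ m : ℤ, f m = p.eval (m : ℚ))
    (hsym : ∀ m : ℤ, f (m - 1) = (-1 : ℚ) ^ d * f (-m)) :
    (∀ i : ℕ, d < i →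
      PowerSeries.coeff i
        ((1 - PowerSeries.X) ^ (d + 1) * PowerSeries.mk fun m : ℕ => f (m : ℤ)) = 0) ∧
    (∀ i : ℕ, i ≤ d →
      PowerSeries.coeff i
        ((1 - PowerSeries.X) ^ (d + 1) * PowerSeries.mk fun m : ℕ => f (m : ℤ)) =
      PowerSeries.coeff (d - i)
        ((1 - PowerSeries.X) ^ (d + 1) * PowerSeries.mk fun m : ℕ => f (m : ℤ))) := by
  have hback (n : ℤ) :
      ∑ j ∈ range (d + 2), (-1) ^ j * (d + 1).choose j * f (n - j) = 0 := by
    simpa only [hf, Int.cast_sub, Int.cast_natCast] using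
      p.sum_range_choose_mul_eval_sub_eq_zero (Nat.lt_succ_of_le hdeg) (n : ℚ)
  simp only [coeff_one_sub_X_pow_mul_mk]
  exact ⟨fun i hi => (truncBackwardDiff_of_le hi f).trans (hback i),
    fun i hi => truncBackwardDiff_symm hi hback hsym⟩

/-- For `d ≥ 1` and a polynomial function `f : ℤ → ℚ` of degree at most `d`
satisfying `f (m-1) = (-1)^d * f (-m)` for all integers `m`, the power series
`D = (1 - X)^(d+1) * Σ_{m ≥ 0} f(m) X^m` is a polynomial of degree at most `d`
with symmetric coefficients `D_i = D_{d-i}`. -/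
theorem stmt_0 (d : ℕ) (hd : 1 ≤ d) (f : ℤ → ℚ) (p : Polynomial ℚ)
    (hdeg : p.natDegree ≤ d) (hf : ∀ m : ℤ, f m = p.eval (m : ℚ))
    (hsym : ∀ m : ℤ, f (m - 1) = (-1 : ℚ) ^ d * f (-m)) :
    (∀ i : ℕ, d < i →
      PowerSeries.coeff i
        ((1 - PowerSeries.X) ^ (d + 1) * PowerSeries.mk fun m : ℕ => f (m : ℤ)) = 0) ∧
    (∀ i : ℕ, i ≤ d →
      PowerSeries.coeff i
        ((1 - PowerSeries.X) ^ (d + 1) * PowerSeries.mk fun m : ℕ => f (m : ℤ)) =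
      PowerSeries.coeff (d - i)
        ((1 - PowerSeries.X) ^ (d + 1) * PowerSeries.mk fun m : ℕ => f (m : ℤ))) :=
  stmt_0_general d f p hdeg hf hsym
end

section
/- Let P ⊆ ℝ^d be the convex hull of a finite subset of ℤ^d, with 0 in the interior of P, and suppose the polar P° = {y ∈ ℝ^d : ⟨x, y⟩ ≤ 1 for all x ∈ P} is also the convex hull of a finite subset of ℤ^d. Then for every integer m ≥ 1 and every lattice point v ∈ ℤ^d, v lies in the interior of mP if and only if v lies in (m−1)P. -/
/-!
Bipolar duality turns the vertex description `P° = conv T` into the facet description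
`P = {x | ⟨t, x⟩ ≤ 1 for all t ∈ T}`. Hence `mP = {x | ⟨t, x⟩ ≤ m}` and
`int (mP) = {x | ⟨t, x⟩ < m}`; for a lattice point `v` and `t ∈ T ⊆ ℤ^d` the pairing `⟨t, v⟩` is an
integer, so `⟨t, v⟩ < m` is the same as `⟨t, v⟩ ≤ m - 1`. When `m = 1` the right side is
`{x | ⟨t, x⟩ ≤ 0} = {0}` because `P` is bounded.
-/

open Pointwise

section DotPolar

variable {ι : Type*} [Fintype ι]

def dotPolar (s : Set (ι → ℝ)) : Set (ι → ℝ) := {y | ∀ x ∈ s, x ⬝ᵥ y ≤ 1}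

theorem zero_mem_dotPolar (s : Set (ι → ℝ)) : 0 ∈ dotPolar s := fun x _ => by simp

theorem convex_setOf_dotProduct_le (y : ι → ℝ) (c : ℝ) : Convex ℝ {x : ι → ℝ | x ⬝ᵥ y ≤ c} :=
  convex_halfSpace_le ⟨fun a b => add_dotProduct a b y, fun r a => smul_dotProduct r a y⟩ c

theorem dotPolar_convexHull (s : Set (ι → ℝ)) : dotPolar (convexHull ℝ s) = dotPolar s := by
  refine subset_antisymm (fun y hy x hx => hy x (subset_convexHull ℝ s hx)) fun y hy => ?_
  exact convexHull_min hy (convex_setOf_dotProduct_le y 1)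

theorem dotPolar_dotPolar {s : Set (ι → ℝ)} (hconv : Convex ℝ s) (hclosed : IsClosed s)
    (h0 : 0 ∈ s) : dotPolar (dotPolar s) = s := by
  classical
  refine subset_antisymm (fun x hx => ?_) fun x hx y hy => dotProduct_comm y x ▸ hy x hx
  by_contra hxs
  -- Rescaling a functional separating `x` from `s` gives a point of the polar pairing with `x` to
  -- more than `1`.
  obtain ⟨f, u, hfs, hfx⟩ := geometric_hahn_banach_closed_point hconv hclosed hxs
  obtain ⟨w, hw⟩ : ∃ w : ι → ℝ, ∀ z, f z = w ⬝ᵥ z :=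
    ⟨(dotProductEquiv ℝ ι).symm f.toLinearMap, fun z => by
      rw [← dotProductEquiv_apply_apply, LinearEquiv.apply_symm_apply]; rfl⟩
  have hu : 0 < u := by simpa using hfs 0 h0
  have hmem : u⁻¹ • w ∈ dotPolar s := fun z hz => by
    rw [dotProduct_smul, smul_eq_mul, dotProduct_comm, ← hw, inv_mul_le_iff₀ hu, mul_one]
    exact (hfs z hz).le
  have hx1 := hx _ hmem
  rw [smul_dotProduct, smul_eq_mul, ← hw, inv_mul_le_iff₀ hu, mul_one] at hx1
  linarith

theorem eq_zero_of_forall_nonneg_smul_mem {E : Type*} [NormedAddCommGroup E] [NormedSpace ℝ E]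
    {K : Set E} (hK : Bornology.IsBounded K) {x : E} (hx : ∀ r : ℝ, 0 ≤ r → r • x ∈ K) :
    x = 0 := by
  obtain ⟨R, hR⟩ := isBounded_iff_forall_norm_le.mp hK
  by_contra hx0
  have hpos : 0 < ‖x‖ := norm_pos_iff.mpr hx0
  have := hR _ (hx ((|R| + 1) / ‖x‖) (by positivity))
  rw [norm_smul, Real.norm_of_nonneg (by positivity), div_mul_cancel₀ _ hpos.ne'] at this
  linarith [le_abs_self R]

theorem smul_dotPolar {s : Set (ι → ℝ)} (hb : Bornology.IsBounded (dotPolar s)) {c : ℝ}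
    (hc : 0 ≤ c) : c • dotPolar s = {x | ∀ y ∈ s, y ⬝ᵥ x ≤ c} := by
  rcases hc.eq_or_lt with rfl | hc
  · rw [Set.zero_smul_set ⟨0, zero_mem_dotPolar s⟩]
    refine subset_antisymm (by simp) fun x hx => ?_
    refine Set.mem_singleton_iff.mpr (eq_zero_of_forall_nonneg_smul_mem hb fun r hr y hy => ?_)
    rw [dotProduct_smul, smul_eq_mul]
    nlinarith [hx y hy]
  · ext x
    simp only [Set.mem_smul_set_iff_inv_smul_mem₀ hc.ne', dotPolar, Set.mem_ofPred_eq,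
      dotProduct_smul, smul_eq_mul, inv_mul_le_iff₀ hc, mul_one]

theorem interior_setOf_dotProduct_le (y : ι → ℝ) {c : ℝ} (hc : 0 < c) :
    interior {x | y ⬝ᵥ x ≤ c} = {x | y ⬝ᵥ x < c} := by
  classical
  rcases eq_or_ne y 0 with rfl | hy
  · simp [hc, hc.le]
  have hsurj : Function.Surjective (dotProductEquiv ℝ ι y) := fun r =>
    ⟨(r / (y ⬝ᵥ y)) • y, by
      simp [div_mul_cancel₀ _ (dotProduct_self_eq_zero.not.mpr hy)]⟩
  have hpre :=
    (LinearMap.isOpenMap_of_finiteDimensional _ hsurj).preimage_interior_eq_interior_preimage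
      (LinearMap.continuous_of_finiteDimensional _) (s := Set.Iic c)
  rw [interior_Iic] at hpre
  exact hpre.symm

theorem interior_setOf_forall_dotProduct_le {s : Set (ι → ℝ)} (hs : s.Finite) {c : ℝ}
    (hc : 0 < c) : interior {x | ∀ y ∈ s, y ⬝ᵥ x ≤ c} = {x | ∀ y ∈ s, y ⬝ᵥ x < c} := by
  have hInter (r : (ι → ℝ) → (ι → ℝ) → Prop) : {x | ∀ y ∈ s, r y x} = ⋂ y ∈ s, {x | r y x} := by
    ext; simp
  rw [hInter, hInter, hs.interior_biInter]
  simp only [interior_setOf_dotProduct_le _ hc]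

end DotPolar

theorem Int.cast_lt_natCast_iff_le_cast_sub_one {R : Type*} [Ring R] [LinearOrder R]
    [IsStrictOrderedRing R] {a : ℤ} {m : ℕ} (hm : 1 ≤ m) :
    (a : R) < m ↔ (a : R) ≤ ((m - 1 : ℕ) : R) := by
  rw [Nat.cast_sub hm, ← Int.cast_natCast, Nat.cast_one]
  norm_cast
  omega

/-- If `P ⊆ ℝ^d` is a reflexive lattice polytope, then for every integer `m ≥ 1`
and every lattice point `v ∈ ℤ^d`, `v` lies in the interior of `mP` if and only if `v` lies
in `(m-1)P`. -/
theorem stmt_2 (d : ℕ) (S : Finset (Fin d → ℤ)) (P : Set (Fin d → ℝ))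
    (hP : P = convexHull ℝ ((fun v : Fin d → ℤ => fun i => (v i : ℝ)) '' S))
    (h0 : (0 : Fin d → ℝ) ∈ interior P)
    (T : Finset (Fin d → ℤ))
    (hpolar : {y : Fin d → ℝ | ∀ x ∈ P, ∑ i, x i * y i ≤ 1} =
      convexHull ℝ ((fun v : Fin d → ℤ => fun i => (v i : ℝ)) '' T)) :
    ∀ m : ℕ, 1 ≤ m → ∀ v : Fin d → ℤ,
      ((fun i => (v i : ℝ)) ∈ interior ((m : ℝ) • P) ↔
        (fun i => (v i : ℝ)) ∈ ((m - 1 : ℕ) : ℝ) • P) := by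
  intro m hm v
  have hPconv : Convex ℝ P := hP ▸ convex_convexHull ℝ _
  have hPcompact : IsCompact P := hP ▸ (S.finite_toSet.image _).isCompact_convexHull (𝕜 := ℝ)
  have hPpolar : P = dotPolar ((fun v : Fin d → ℤ => fun i => (v i : ℝ)) '' T) := by
    rw [← dotPolar_convexHull, ← show dotPolar P = _ from hpolar,
      dotPolar_dotPolar hPconv hPcompact.isClosed (interior_subset h0)]
  have hbdd : Bornology.IsBounded (dotPolar ((fun v : Fin d → ℤ => fun i => (v i : ℝ)) '' T)) :=
    hPpolar ▸ hPcompact.isBounded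
  rw [hPpolar, smul_dotPolar hbdd (by positivity), smul_dotPolar hbdd (by positivity),
    interior_setOf_forall_dotProduct_le (T.finite_toSet.image _) (by exact_mod_cast hm)]
  simp only [Set.mem_ofPred_eq, Set.forall_mem_image]
  refine forall₂_congr fun t _ => ?_
  have hcast : (fun i => (t i : ℝ)) ⬝ᵥ (fun i => (v i : ℝ)) = ((t ⬝ᵥ v : ℤ) : ℝ) :=
    (RingHom.map_dotProduct (Int.castRingHom ℝ) t v).symm
  rw [hcast]
  exact Int.cast_lt_natCast_iff_le_cast_sub_one hm
end

section
/- Let v_1, …, v_k ∈ ℤ^d be vectors that are linearly independent over ℝ. Then every lattice point w ∈ ℤ^d of the form w = c_1 v_1 + ⋯ + c_k v_k with all c_i > 0 (i.e., w lies in the relative interior of the cone generated by v_1,…,v_k) can be written uniquely as w = v + Σ_{i ∉ S} v_i + Σ_{i=1}^k n_i v_i, where S ⊆ {1,…,k} is a subset, v ∈ ℤ^d is of the form v = Σ_{i ∈ S} a_i v_i with real coefficients 0 < a_i < 1 for all i ∈ S, and n_1, …, n_k are nonnegative integers. The triple (S, v, (n_1,…,n_k)) is uniquely determined by w. -/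
/-- Let `v₁, …, v_k ∈ ℤ^d` be linearly independent over `ℝ`. Every lattice point
`w` in the relative interior of the cone generated by the `vᵢ` can be written uniquely as
`w = b + Σ_{i ∉ S} vᵢ + Σᵢ nᵢ vᵢ`, where `S ⊆ {1,…,k}`, `b = Σ_{i ∈ S} aᵢ vᵢ` with real
coefficients `0 < aᵢ < 1` for `i ∈ S`, and the `nᵢ` are nonnegative integers. The triple
`(S, b, n)` is uniquely determined by `w`. -/
theorem stmt_7 (d k : ℕ) (v : Fin k → Fin d → ℤ)
    (hli : LinearIndependent ℝ (fun j : Fin k => fun i => (v j i : ℝ))) :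
    ∀ w : Fin d → ℤ,
      (∃ c : Fin k → ℝ, (∀ j, 0 < c j) ∧
        (fun i => (w i : ℝ)) = ∑ j, c j • fun i => (v j i : ℝ)) →
      ∃! t : Finset (Fin k) × (Fin d → ℤ) × (Fin k → ℕ),
        (∃ a : Fin k → ℝ, (∀ j ∈ t.1, 0 < a j ∧ a j < 1) ∧
          (fun i => (t.2.1 i : ℝ)) = ∑ j ∈ t.1, a j • fun i => (v j i : ℝ)) ∧
        w = t.2.1 + ∑ j ∈ t.1ᶜ, v j + ∑ j, (t.2.2 j : ℤ) • v j := by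
  classical
  intro w hw
  obtain ⟨c, hcpos, hc⟩ := hw
  have hcpt : ∀ i, (w i : ℝ) = ∑ j, c j * (v j i : ℝ) := by
    intro i
    have := congrFun hc i
    simpa [Finset.sum_apply] using this
  have coeff_unique : ∀ e : Fin k → ℝ,
      (∀ i, (w i : ℝ) = ∑ j, e j * (v j i : ℝ)) → e = c := by
    intro e he
    have h0 : ∑ j, (e j - c j) • (fun i => (v j i : ℝ)) = 0 := by
      funext i
      simp only [Finset.sum_apply, Pi.smul_apply, smul_eq_mul, Pi.zero_apply, sub_mul,
        Finset.sum_sub_distrib]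
      have h1 := hcpt i
      have h2 := he i
      linarith
    funext j
    have := Fintype.linearIndependent_iff.mp hli (fun j => e j - c j) h0 j
    simpa [sub_eq_zero] using this
  -- any valid decomposition determines the coefficients
  have key : ∀ (S : Finset (Fin k)) (b : Fin d → ℤ) (n : Fin k → ℕ) (a : Fin k → ℝ),
      ((fun i => (b i : ℝ)) = ∑ j ∈ S, a j • fun i => (v j i : ℝ)) →
      (w = b + ∑ j ∈ Sᶜ, v j + ∑ j, (n j : ℤ) • v j) →
      (fun j => (if j ∈ S then a j else 1) + (n j : ℝ)) = c := by
    intro S b n a hb hwb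
    apply coeff_unique
    intro i
    have hbi : (b i : ℝ) = ∑ j ∈ S, a j * (v j i : ℝ) := by
      simpa [Finset.sum_apply] using congrFun hb i
    have hwi : w i = b i + ∑ j ∈ Sᶜ, v j i + ∑ j, (n j : ℤ) * v j i := by
      have := congrFun hwb i
      simpa [Finset.sum_apply] using this
    have hwr : (w i : ℝ) = (b i : ℝ) + ∑ j ∈ Sᶜ, (v j i : ℝ)
        + ∑ j, (n j : ℝ) * (v j i : ℝ) := by
      exact_mod_cast hwi
    have split : ∑ j, ((if j ∈ S then a j else 1) + (n j : ℝ)) * (v j i : ℝ)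
        = (∑ j ∈ S, a j * (v j i : ℝ) + ∑ j ∈ Sᶜ, (v j i : ℝ))
          + ∑ j, (n j : ℝ) * (v j i : ℝ) := by
      simp only [add_mul, Finset.sum_add_distrib]
      congr 1
      rw [← Finset.sum_add_sum_compl S]
      congr 1
      · exact Finset.sum_congr rfl (fun j hj => by simp [hj])
      · refine Finset.sum_congr rfl (fun j hj => ?_)
        simp only [Finset.mem_compl] at hj
        simp [hj]
    rw [split, ← hbi, ← hwr]
  -- per-coordinate arithmetic
  have arith : ∀ (S : Finset (Fin k)) (n : Fin k → ℕ) (a : Fin k → ℝ) (j : Fin k),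
      (∀ j ∈ S, 0 < a j ∧ a j < 1) →
      ((if j ∈ S then a j else 1) + (n j : ℝ) = c j) →
      ((j ∈ S ↔ Int.fract (c j) ≠ 0) ∧
        (n j : ℤ) = if Int.fract (c j) ≠ 0 then ⌊c j⌋ else ⌊c j⌋ - 1) := by
    intro S n a j ha hj
    by_cases hjS : j ∈ S
    · obtain ⟨h0, h1⟩ := ha j hjS
      rw [if_pos hjS] at hj
      have hfr : Int.fract (c j) = a j := by
        rw [← hj]
        rw [show ((n j : ℝ)) = ((n j : ℤ) : ℝ) by push_cast; ring, Int.fract_add_intCast]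
        exact Int.fract_eq_self.mpr ⟨le_of_lt h0, h1⟩
      have hfl : ⌊c j⌋ = (n j : ℤ) := by
        rw [← hj, show ((n j : ℝ)) = ((n j : ℤ) : ℝ) by push_cast; ring,
          Int.floor_add_intCast]
        simp [Int.floor_eq_zero_iff, Set.mem_Ico, le_of_lt h0, h1]
      constructor
      · simp [hjS, hfr, ne_of_gt h0]
      · rw [if_pos (by rw [hfr]; exact ne_of_gt h0), hfl]
    · rw [if_neg hjS] at hj
      have hcj : c j = ((1 + n j : ℤ) : ℝ) := by rw [← hj]; push_cast; ring
      have hfr : Int.fract (c j) = 0 := by rw [hcj, Int.fract_intCast]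
      have hfl : ⌊c j⌋ = 1 + (n j : ℤ) := by rw [hcj, Int.floor_intCast]
      constructor
      · simp [hjS, hfr]
      · rw [if_neg (by simp [hfr]), hfl]; ring
  -- canonical decomposition
  set S₀ : Finset (Fin k) := Finset.univ.filter (fun j => Int.fract (c j) ≠ 0) with hS₀
  have hmemS₀ : ∀ j, j ∈ S₀ ↔ Int.fract (c j) ≠ 0 := by
    intro j; simp [hS₀]
  set n₀ : Fin k → ℕ :=
    fun j => (if Int.fract (c j) ≠ 0 then ⌊c j⌋ else ⌊c j⌋ - 1).toNat with hn₀
  have hfloor_pos : ∀ j, Int.fract (c j) = 0 → 1 ≤ ⌊c j⌋ := by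
    intro j hfj
    have : c j = (⌊c j⌋ : ℝ) := by
      have := Int.fract_add_floor (c j)
      rw [hfj] at this; linarith
    have h0 : (0 : ℝ) < (⌊c j⌋ : ℝ) := this ▸ hcpos j
    exact_mod_cast Int.cast_pos.mp h0
  have hn₀cast : ∀ j, (n₀ j : ℤ) = if Int.fract (c j) ≠ 0 then ⌊c j⌋ else ⌊c j⌋ - 1 := by
    intro j
    rw [hn₀]
    apply Int.toNat_of_nonneg
    by_cases hfj : Int.fract (c j) ≠ 0
    · rw [if_pos hfj]
      exact Int.floor_nonneg.mpr (le_of_lt (hcpos j))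
    · rw [if_neg hfj]
      have := hfloor_pos j (by simpa using hfj)
      omega
  set b₀ : Fin d → ℤ := w - ∑ j ∈ S₀ᶜ, v j - ∑ j, (n₀ j : ℤ) • v j with hb₀
  have hwb₀ : w = b₀ + ∑ j ∈ S₀ᶜ, v j + ∑ j, (n₀ j : ℤ) • v j := by
    rw [hb₀]; abel
  have hb₀eq : (fun i => (b₀ i : ℝ)) = ∑ j ∈ S₀, Int.fract (c j) • fun i => (v j i : ℝ) := by
    funext i
    have hb₀i : (b₀ i : ℝ) = (w i : ℝ) - ∑ j ∈ S₀ᶜ, (v j i : ℝ)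
        - ∑ j, (n₀ j : ℝ) * (v j i : ℝ) := by
      rw [hb₀]
      simp only [Pi.sub_apply, Finset.sum_apply, Pi.smul_apply, smul_eq_mul]
      push_cast
      ring
    rw [Finset.sum_apply]
    simp only [Pi.smul_apply, smul_eq_mul]
    rw [hb₀i, hcpt i]
    have hB : ∑ j ∈ S₀ᶜ, (v j i : ℝ) = ∑ j, (if j ∈ S₀ then 0 else (v j i : ℝ)) := by
      rw [show (∑ j, (if j ∈ S₀ then 0 else (v j i : ℝ)))
          = ∑ j, (if j ∈ S₀ᶜ then (v j i : ℝ) else 0) from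
        Finset.sum_congr rfl (fun j _ => by by_cases h : j ∈ S₀ <;> simp [h])]
      rw [Finset.sum_ite_mem, Finset.univ_inter]
    have hD : ∑ j ∈ S₀, Int.fract (c j) * (v j i : ℝ)
        = ∑ j, (if j ∈ S₀ then Int.fract (c j) * (v j i : ℝ) else 0) := by
      rw [Finset.sum_ite_mem, Finset.univ_inter]
    rw [hB, hD, ← Finset.sum_sub_distrib, ← Finset.sum_sub_distrib]
    refine Finset.sum_congr rfl (fun j _ => ?_)
    by_cases hj : j ∈ S₀
    · have hnj : (n₀ j : ℝ) = (⌊c j⌋ : ℝ) := by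
        have := hn₀cast j
        rw [if_pos ((hmemS₀ j).mp hj)] at this
        exact_mod_cast congrArg (Int.cast : ℤ → ℝ) this
      rw [if_pos hj, if_pos hj, hnj, Int.fract]
      ring
    · have hfj : Int.fract (c j) = 0 := by
        have := (hmemS₀ j).not.mp hj
        simpa using this
      have hnj : (n₀ j : ℝ) = (⌊c j⌋ : ℝ) - 1 := by
        have := hn₀cast j
        rw [if_neg (by simp [hfj])] at this
        have : ((n₀ j : ℤ) : ℝ) = ((⌊c j⌋ - 1 : ℤ) : ℝ) := by exact_mod_cast congrArg (Int.cast : ℤ → ℝ) this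
        push_cast at this
        exact_mod_cast this
      have hcf : c j = (⌊c j⌋ : ℝ) := by
        have h := Int.fract_add_floor (c j)
        rw [hfj] at h
        linarith
      rw [if_neg hj, if_neg hj, hnj, ← hcf]
      ring
  -- assemble
  refine ⟨(S₀, b₀, n₀), ⟨⟨fun j => Int.fract (c j), fun j hj => ?_, hb₀eq⟩, hwb₀⟩, ?_⟩
  · have hne := (hmemS₀ j).mp hj
    exact ⟨lt_of_le_of_ne (Int.fract_nonneg (c j)) (Ne.symm hne), Int.fract_lt_one (c j)⟩
  · rintro ⟨S, b, n⟩ ⟨⟨a, ha, hb⟩, hwb⟩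
    have he := key S b n a hb hwb
    have hSeq : S = S₀ := by
      ext j
      rw [(arith S n a j ha (congrFun he j)).1, hmemS₀ j]
    have hneq : n = n₀ := by
      funext j
      have h1 := (arith S n a j ha (congrFun he j)).2
      have h2 := hn₀cast j
      omega
    have hbeq : b = b₀ := by
      have : b = w - ∑ j ∈ Sᶜ, v j - ∑ j, (n j : ℤ) • v j := by
        rw [hwb]; abel
      rw [this, hSeq, hneq, hb₀]
    simp only [Prod.mk.injEq]
    exact ⟨hSeq, hbeq, hneq⟩
end

section
/- Let f = (1/3, 1/3, 1/3, 1/3, 1/3, 1/3) ∈ ℚ^6, let N ⊆ ℚ^6 be the subgroup generated by the standard basis vectors e_1, …, e_6 and f, and let P ⊆ ℝ^6 be the convex hull of {e_1, …, e_6, e_1 − f, …, e_6 − f}. Then P is reflexive with respect to N: 0 lies in the interior of P, all vertices of P lie in N, and the polar P° = {y ∈ ℝ^6 : ⟨x, y⟩ ≤ 1 for all x ∈ P} is the convex hull of a finite subset of the dual lattice M = {u ∈ ℚ^6 : ⟨u, v⟩ ∈ ℤ for all v ∈ N}. -/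
/-!
Explicit barycentric coordinates show that the inequalities `|∑ xᵢ| ≤ 1` and
`∑ xᵢ - 6 xⱼ ≤ 1` already force `x ∈ P = conv {eⱼ, eⱼ - f}`, so `0` is an interior point.
The polar of `P` is `{y | yⱼ ≤ 1, yⱼ - (∑ yᵢ) / 3 ≤ 1}`, which (again by explicit coordinates)
is the convex hull of the eight vectors `±(1,…,1)` and `(1,…,1) - 6 eⱼ`. These have integer
entries and coordinate sum divisible by `3`, so they pair integrally with each `eⱼ` and with `f`,
hence with all of `N`.
-/

section Polar

variable {ι 𝕜 : Type*} [Fintype ι] [Field 𝕜] [LinearOrder 𝕜] [IsStrictOrderedRing 𝕜]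

lemma convex_setOf_forall_dotProduct_le (s : Set (ι → 𝕜)) (c : 𝕜) :
    Convex 𝕜 {y : ι → 𝕜 | ∀ x ∈ s, x ⬝ᵥ y ≤ c} := by
  simp only [Set.ofPred_forall]
  exact convex_iInter₂ fun x _ =>
    convex_halfSpace_le ⟨dotProduct_add x, fun a y => dotProduct_smul a x y⟩ c

lemma forall_mem_convexHull_dotProduct_le_iff {s : Set (ι → 𝕜)} {y : ι → 𝕜} {c : 𝕜} :
    (∀ x ∈ convexHull 𝕜 s, x ⬝ᵥ y ≤ c) ↔ ∀ x ∈ s, x ⬝ᵥ y ≤ c :=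
  ⟨fun h x hx => h x (subset_convexHull 𝕜 s hx), fun h =>
    convexHull_min h (convex_halfSpace_le
      ⟨fun a b => add_dotProduct a b y, fun a x => smul_dotProduct a x y⟩ c)⟩

end Polar

lemma exists_int_dotProduct_eq_of_mem_closure {ι R : Type*} [Fintype ι] [Ring R]
    {S : Set (ι → R)} {u : ι → R} (hS : ∀ s ∈ S, ∃ n : ℤ, u ⬝ᵥ s = n) {w : ι → R}
    (hw : w ∈ AddSubgroup.closure S) : ∃ n : ℤ, u ⬝ᵥ w = n := by
  induction hw using AddSubgroup.closure_induction with
  | mem s hs => exact hS s hs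
  | zero => exact ⟨0, by simp⟩
  | add a b _ _ ha hb =>
    obtain ⟨m, hm⟩ := ha
    obtain ⟨n, hn⟩ := hb
    exact ⟨m + n, by simp [dotProduct_add, hm, hn]⟩
  | neg a _ ha =>
    obtain ⟨m, hm⟩ := ha
    exact ⟨-m, by simp [dotProduct_neg, hm]⟩

def polytopeVertex (K : Type*) [DivisionRing K] : Fin 6 ⊕ Fin 6 → Fin 6 → K :=
  Sum.elim (fun j => Pi.single j 1) (fun j => Pi.single j 1 - fun _ => 1 / 3)

def polarVertex (R : Type*) [Ring R] : Fin 2 ⊕ Fin 6 → Fin 6 → R :=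
  Sum.elim ![1, -1] (fun j => 1 - Pi.single j 6)

lemma map_polytopeVertex {K L : Type*} [DivisionRing K] [DivisionRing L] (φ : K →+* L)
    (k : Fin 6 ⊕ Fin 6) (i : Fin 6) : φ (polytopeVertex K k i) = polytopeVertex L k i := by
  rcases k with j | j <;> simp [polytopeVertex, Pi.single_apply, apply_ite φ, map_ofNat]

lemma map_polarVertex {R S : Type*} [Ring R] [Ring S] (φ : R →+* S)
    (k : Fin 2 ⊕ Fin 6) (i : Fin 6) : φ (polarVertex R k i) = polarVertex S k i := by
  rcases k with b | j
  · fin_cases b <;> simp [polarVertex]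
  · simp [polarVertex, Pi.single_apply, apply_ite φ, map_ofNat]

section Field

variable {K : Type*} [Field K]

lemma polytopeVertex_inl_dotProduct (j : Fin 6) (y : Fin 6 → K) :
    polytopeVertex K (.inl j) ⬝ᵥ y = y j := by
  simp [polytopeVertex]

lemma polytopeVertex_inr_dotProduct (j : Fin 6) (y : Fin 6 → K) :
    polytopeVertex K (.inr j) ⬝ᵥ y = y j - (∑ i, y i) / 3 := by
  have hf : (fun _ => (1 / 3 : K)) ⬝ᵥ y = (∑ i, y i) / 3 := by
    simp [dotProduct, ← Finset.mul_sum, div_eq_inv_mul]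
  simp only [polytopeVertex, Sum.elim_inr, sub_dotProduct, single_dotProduct, one_mul, hf]

lemma forall_polytopeVertex_dotProduct_le_one_iff [LinearOrder K] {y : Fin 6 → K} :
    (∀ k, polytopeVertex K k ⬝ᵥ y ≤ 1) ↔ ∀ j, y j ≤ 1 ∧ y j - (∑ i, y i) / 3 ≤ 1 := by
  simp only [Sum.forall, polytopeVertex_inl_dotProduct, polytopeVertex_inr_dotProduct, forall_and]

end Field

section OrderedField

variable {K : Type*} [Field K] [LinearOrder K] [IsStrictOrderedRing K]

lemma mem_convexHull_polytopeVertex {x : Fin 6 → K} (hsum : |∑ i, x i| ≤ 1)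
    (hx : ∀ j, ∑ i, x i - 6 * x j ≤ 1) :
    x ∈ convexHull K (Set.range (polytopeVertex K)) := by
  set σ := ∑ i, x i
  obtain ⟨hσ₁, hσ₂⟩ := abs_le.1 hsum
  set m : Fin 6 → K := fun j => x j + (1 - σ) / 6
  have hm : ∀ j, 0 ≤ m j := fun j => by simp only [m]; linarith [hx j]
  have hm₁ : ∑ j, m j = 1 := by
    simp only [m, σ, Finset.sum_add_distrib, Finset.sum_const, Finset.card_univ,
      Fintype.card_fin, nsmul_eq_mul, Nat.cast_ofNat]
    ring
  refine mem_convexHull_of_exists_fintype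
    (Sum.elim (fun j => (1 + σ) / 2 * m j) fun j => (1 - σ) / 2 * m j) (polytopeVertex K)
    ?_ ?_ Set.mem_range_self ?_
  · rintro (j | j) <;> simp only [Sum.elim_inl, Sum.elim_inr] <;>
      exact mul_nonneg (by linarith) (hm j)
  · simp only [Fintype.sum_sum_type, Sum.elim_inl, Sum.elim_inr, ← Finset.mul_sum, hm₁]
    ring
  · ext i
    simp only [Finset.sum_apply, Fintype.sum_sum_type, Pi.smul_apply, smul_eq_mul,
      Sum.elim_inl, Sum.elim_inr, polytopeVertex, Pi.sub_apply, Pi.single_apply, mul_sub,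
      Finset.sum_sub_distrib, mul_ite, mul_one, mul_zero, Finset.sum_ite_eq, Finset.mem_univ,
      if_true, ← Finset.sum_mul, ← Finset.mul_sum, hm₁]
    simp only [m]
    ring

lemma polytopeVertex_dotProduct_polarVertex_le_one (k : Fin 6 ⊕ Fin 6) (l : Fin 2 ⊕ Fin 6) :
    polytopeVertex K k ⬝ᵥ polarVertex K l ≤ 1 := by
  revert k
  rw [forall_polytopeVertex_dotProduct_le_one_iff]
  intro j
  rcases l with b | l
  · fin_cases b <;> norm_num [polarVertex]
  · by_cases h : j = l <;> simp [polarVertex, Pi.single_apply, Finset.sum_sub_distrib, h]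

lemma mem_convexHull_polarVertex {y : Fin 6 → K}
    (hy : ∀ j, y j ≤ 1 ∧ y j - (∑ i, y i) / 3 ≤ 1) :
    y ∈ convexHull K (Set.range (polarVertex K)) := by
  set s := ∑ i, y i
  set c := min 1 (1 + s / 3)
  have hc₁ : c ≤ 1 := min_le_left _ _
  have hc₂ : c ≤ 1 + s / 3 := min_le_right _ _
  have hc : ∀ j, y j ≤ c := fun j => le_min (hy j).1 (by linarith [(hy j).2])
  refine mem_convexHull_of_exists_fintype
    (Sum.elim ![(1 + s / 3 - c) / 2, (1 - c) / 2] fun j => (c - y j) / 6) (polarVertex K)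
    ?_ ?_ Set.mem_range_self ?_
  · rintro (b | j)
    · fin_cases b <;>
        simp only [Fin.zero_eta, Fin.mk_one, Sum.elim_inl, Matrix.cons_val_zero,
          Matrix.cons_val_one] <;> linarith
    · simp only [Sum.elim_inr]; linarith [hc j]
  · simp only [Fintype.sum_sum_type, Sum.elim_inl, Sum.elim_inr, Fin.sum_univ_two, Fin.isValue,
      Matrix.cons_val_zero, Matrix.cons_val_one, ← Finset.sum_div, Finset.sum_sub_distrib,
      Finset.sum_const, Finset.card_univ, Fintype.card_fin, nsmul_eq_mul, s]
    ring
  · ext i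
    simp only [Finset.sum_apply, Fintype.sum_sum_type, Pi.smul_apply, smul_eq_mul,
      Sum.elim_inl, Sum.elim_inr, polarVertex, Fin.sum_univ_two, Matrix.cons_val_zero,
      Matrix.cons_val_one, Pi.one_apply, Pi.neg_apply, Pi.sub_apply, Pi.single_apply, mul_sub,
      Finset.sum_sub_distrib, mul_ite, mul_one, mul_zero, Finset.sum_ite_eq, Finset.mem_univ,
      if_true, ← Finset.sum_div, Finset.sum_const, Finset.card_univ, Fintype.card_fin, nsmul_eq_mul,
      s]
    ring

end OrderedField

lemma zero_mem_interior_convexHull_polytopeVertex :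
    (0 : Fin 6 → ℝ) ∈ interior (convexHull ℝ (Set.range (polytopeVertex ℝ))) := by
  have hsum : Continuous fun x : Fin 6 → ℝ => ∑ i, x i := by fun_prop
  have habs : ∀ᶠ x in nhds (0 : Fin 6 → ℝ), |∑ i, x i| < 1 :=
    (hsum.abs.continuousAt).eventually_lt continuousAt_const (by simp)
  have hfacet : ∀ᶠ x in nhds (0 : Fin 6 → ℝ), ∀ j, ∑ i, x i - 6 * x j < 1 :=
    Filter.eventually_all.2 fun j =>
      (hsum.sub (continuous_const.mul (continuous_apply j))).continuousAt.eventually_lt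
        continuousAt_const (by simp)
  rw [mem_interior_iff_mem_nhds]
  filter_upwards [habs, hfacet] with x hx₁ hx₂
  exact mem_convexHull_polytopeVertex hx₁.le fun j => (hx₂ j).le

lemma polar_convexHull_polytopeVertex :
    {y : Fin 6 → ℝ | ∀ x ∈ convexHull ℝ (Set.range (polytopeVertex ℝ)), x ⬝ᵥ y ≤ 1} =
      convexHull ℝ (Set.range (polarVertex ℝ)) := by
  simp_rw [forall_mem_convexHull_dotProduct_le_iff]
  refine subset_antisymm (fun y hy => mem_convexHull_polarVertex ?_) ?_
  · exact forall_polytopeVertex_dotProduct_le_one_iff.1 (Set.forall_mem_range.1 hy)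
  · refine convexHull_min ?_ (convex_setOf_forall_dotProduct_le _ _)
    rintro _ ⟨l, rfl⟩ _ ⟨k, rfl⟩
    exact polytopeVertex_dotProduct_polarVertex_le_one k l

lemma exists_int_polarVertex_dotProduct_eq (l : Fin 2 ⊕ Fin 6) {w : Fin 6 → ℚ}
    (hw : w ∈ AddSubgroup.closure
      (Set.range (fun j : Fin 6 => Pi.single j (1 : ℚ)) ∪ {fun _ => 1 / 3})) :
    ∃ n : ℤ, polarVertex ℚ l ⬝ᵥ w = n := by
  refine exists_int_dotProduct_eq_of_mem_closure ?_ hw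
  rintro _ (⟨j, rfl⟩ | rfl)
  · exact ⟨polarVertex ℤ l j, by simp [← map_polarVertex (Int.castRingHom ℚ)]⟩
  · rcases l with b | j
    · fin_cases b
      · exact ⟨2, by norm_num [polarVertex, dotProduct]⟩
      · exact ⟨-2, by norm_num [polarVertex, dotProduct]⟩
    · exact ⟨0, by
        simp [polarVertex, dotProduct, sub_mul, Finset.sum_sub_distrib, ← Finset.sum_mul]⟩

/-- Let `f = (1/3,…,1/3) ∈ ℚ^6`, let `N = ℤ⟨e₁,…,e₆,f⟩ ⊆ ℚ^6`, and let
`P ⊆ ℝ^6` be the convex hull of `{e₁,…,e₆, e₁-f,…,e₆-f}`. Then `P` is reflexive with respect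
to `N`: `0` lies in the interior of `P`, all vertices of `P` lie in `N`, and the polar `P°`
is the convex hull of a finite subset of the dual lattice `M`. -/
theorem stmt_8 (f : Fin 6 → ℚ) (hf : f = fun _ => 1 / 3)
    (N : AddSubgroup (Fin 6 → ℚ))
    (hN : N = AddSubgroup.closure
      (Set.range (fun j : Fin 6 => Pi.single j (1 : ℚ)) ∪ {f}))
    (V : Set (Fin 6 → ℚ))
    (hV : V = Set.range (fun j : Fin 6 => Pi.single j (1 : ℚ)) ∪
      Set.range (fun j : Fin 6 => Pi.single j (1 : ℚ) - f))
    (P : Set (Fin 6 → ℝ))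
    (hP : P = convexHull ℝ ((fun q : Fin 6 → ℚ => fun i => (q i : ℝ)) '' V)) :
    (0 : Fin 6 → ℝ) ∈ interior P ∧
    V ⊆ (N : Set (Fin 6 → ℚ)) ∧
    ∃ T : Finset (Fin 6 → ℚ),
      (∀ u ∈ T, ∀ w ∈ N, ∃ n : ℤ, ∑ i, u i * w i = (n : ℚ)) ∧
      {y : Fin 6 → ℝ | ∀ x ∈ P, ∑ i, x i * y i ≤ 1} =
        convexHull ℝ ((fun q : Fin 6 → ℚ => fun i => (q i : ℝ)) '' (T : Set (Fin 6 → ℚ))) := by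
  subst hf hN hV hP
  have hcast {ι : Type} (v : ι → Fin 6 → ℚ) (w : ι → Fin 6 → ℝ)
      (hvw : ∀ k i, (Rat.castHom ℝ) (v k i) = w k i) :
      (fun q : Fin 6 → ℚ => fun i => (q i : ℝ)) '' Set.range v = Set.range w := by
    rw [← Set.range_comp]
    exact congrArg Set.range (funext fun k => funext (hvw k))
  rw [← Set.Sum.elim_range, ← polytopeVertex, hcast _ _ (map_polytopeVertex _)]
  refine ⟨zero_mem_interior_convexHull_polytopeVertex, ?_, Finset.univ.image (polarVertex ℚ),
    ?_, ?_⟩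
  · rintro _ ⟨j | j, rfl⟩
    · exact AddSubgroup.subset_closure (.inl ⟨j, rfl⟩)
    · exact sub_mem (AddSubgroup.subset_closure (.inl ⟨j, rfl⟩))
        (AddSubgroup.subset_closure (.inr rfl))
  · simp only [Finset.mem_image, Finset.mem_univ, true_and, forall_exists_index,
      forall_apply_eq_imp_iff]
    exact fun l w hw => exists_int_polarVertex_dotProduct_eq l hw
  · rw [Finset.coe_image, Finset.coe_univ, Set.image_univ, hcast _ _ (map_polarVertex _)]
    exact polar_convexHull_polytopeVertex
end

section
/- Let f = (1/3, 1/3, 1/3, 1/3, 1/3, 1/3) ∈ ℚ^6, let N ⊆ ℚ^6 be the subgroup generated by the standard basis vectors e_1, …, e_6 and f, and let P ⊆ ℝ^6 be the convex hull of {e_1, …, e_6, e_1 − f, …, e_6 − f}. Then the set 2P ∩ N contains exactly 78 points and the set 3P ∩ N contains exactly 314 points. -/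
/-!
Every point of `N` is `z + (r/3)·𝟙` with `z` integral and `r ∈ {0, 1, 2}`. The polytope `P` is
the convex join of the simplex `Δ = conv{eⱼ}` and its translate `Δ - f`, so `x ∈ P` iff
`x + t • f ∈ Δ` for some `t ∈ [0, 1]`; eliminating `t` gives `P = {-1 ≤ Σ x ≤ 1, Σ x ≤ 6 xᵢ + 1}`.
For `x = z + (r/3)·𝟙` the conditions for `mP` become the integer conditions
`-m ≤ Σ z + 2r ≤ m` and `Σ z ≤ 6 zᵢ + m`. When `m ≤ 3` they force `zᵢ ≥ -1`, so the points are
enumerated by the tuples `z + 𝟙` of natural numbers with sum at most `6 + m`, and counting them is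
a finite computation.
-/

open Pointwise

theorem mem_convexHull_union_vadd_iff {𝕜 E : Type*} [Field 𝕜] [LinearOrder 𝕜]
    [IsStrictOrderedRing 𝕜] [AddCommGroup E] [Module 𝕜 E] {s : Set E} (hs : s.Nonempty)
    (u x : E) :
    x ∈ convexHull 𝕜 (s ∪ (u +ᵥ s)) ↔ ∃ t ∈ Set.Icc (0 : 𝕜) 1, x - t • u ∈ convexHull 𝕜 s := by
  rw [convexHull_union hs hs.vadd_set, convexHull_vadd, mem_convexJoin]
  constructor
  · rintro ⟨a, ha, _, ⟨b, hb, rfl⟩, hx⟩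
    rw [segment_eq_image] at hx
    obtain ⟨t, ht, rfl⟩ := hx
    refine ⟨t, ht, ?_⟩
    convert convex_convexHull 𝕜 s ha hb (sub_nonneg.2 ht.2) ht.1 (sub_add_cancel 1 t) using 1
    simp only [vadd_eq_add, smul_add]
    abel
  · rintro ⟨t, ht, hy⟩
    refine ⟨_, hy, _, Set.vadd_mem_vadd_set hy, ?_⟩
    rw [segment_eq_image]
    refine ⟨t, ht, ?_⟩
    simp only [vadd_eq_add, smul_add, sub_smul, one_smul]
    abel

theorem AddSubgroup.mem_closure_range_single_one_iff {ι R : Type*} [Fintype ι]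
    [DecidableEq ι] [Ring R] (w : ι → R) :
    w ∈ closure (Set.range fun j => Pi.single j (1 : R)) ↔
      ∃ z : ι → ℤ, w = fun i => (z i : R) := by
  constructor
  · intro hw
    induction hw using closure_induction with
    | mem x hx =>
      obtain ⟨j, rfl⟩ := hx
      exact ⟨Pi.single j 1, by ext i; simp [Pi.single_apply, apply_ite (Int.cast : ℤ → R)]⟩
    | zero => exact ⟨0, by ext; simp⟩
    | add _ _ _ _ ha hb =>
      obtain ⟨a, rfl⟩ := ha
      obtain ⟨b, rfl⟩ := hb
      exact ⟨a + b, by ext; simp⟩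
    | neg _ _ ha =>
      obtain ⟨a, rfl⟩ := ha
      exact ⟨-a, by ext; simp⟩
  · rintro ⟨z, rfl⟩
    have hsum : (fun i => (z i : R)) = ∑ j, z j • Pi.single j (1 : R) := by
      ext i; simp [Finset.sum_apply, Pi.single_apply]
    rw [hsum]
    exact sum_mem fun j _ => zsmul_mem (subset_closure (Set.mem_range_self j)) _

theorem AddSubgroup.mem_closure_range_single_one_union_singleton_iff {ι R : Type*}
    [Fintype ι] [DecidableEq ι] [Ring R] (f w : ι → R) :
    w ∈ closure ((Set.range fun j => Pi.single j (1 : R)) ∪ {f}) ↔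
      ∃ (z : ι → ℤ) (r : ℤ), w = (fun i => (z i : R)) + r • f := by
  simp only [closure_union, mem_sup, mem_closure_range_single_one_iff, mem_closure_singleton]
  constructor
  · rintro ⟨_, ⟨z, rfl⟩, _, ⟨r, rfl⟩, rfl⟩
    exact ⟨z, r, rfl⟩
  · rintro ⟨z, r, rfl⟩
    exact ⟨_, ⟨z, rfl⟩, _, ⟨r, rfl⟩, rfl⟩

def exampleLattice : AddSubgroup (Fin 6 → ℚ) :=
  AddSubgroup.closure (Set.range (fun j : Fin 6 => Pi.single j (1 : ℚ)) ∪ {fun _ => 1 / 3})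

def examplePolytope : Set (Fin 6 → ℝ) :=
  convexHull ℝ ((fun q : Fin 6 → ℚ => fun i => (q i : ℝ)) ''
    (Set.range (fun j : Fin 6 => Pi.single j (1 : ℚ)) ∪
      Set.range (fun j : Fin 6 => Pi.single j (1 : ℚ) - fun _ => 1 / 3)))

theorem examplePolytope_eq :
    examplePolytope = convexHull ℝ (Set.range (fun j : Fin 6 => Pi.single j (1 : ℝ)) ∪
      (((fun _ => -1 / 3) : Fin 6 → ℝ) +ᵥ Set.range (fun j : Fin 6 => Pi.single j (1 : ℝ)))) := by
  rw [examplePolytope, Set.image_union, ← Set.range_comp, ← Set.range_comp, Set.vadd_set_range]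
  congr 3 <;> ext j i <;> by_cases h : i = j <;> simp [h] <;> norm_num

theorem mem_examplePolytope_iff (y : Fin 6 → ℝ) :
    y ∈ examplePolytope ↔ -1 ≤ ∑ i, y i ∧ ∑ i, y i ≤ 1 ∧ ∀ i, ∑ j, y j ≤ 6 * y i + 1 := by
  rw [examplePolytope_eq, mem_convexHull_union_vadd_iff (Set.range_nonempty _),
    convexHull_rangle_single_eq_stdSimplex]
  have hcoord (t : ℝ) (i : Fin 6) : (y - t • (fun _ => -1 / 3 : Fin 6 → ℝ)) i = y i + t / 3 := by
    simp only [Pi.sub_apply, Pi.smul_apply, smul_eq_mul]; ring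
  have hsum (t : ℝ) : ∑ i, (y i + t / 3) = ∑ i, y i + 2 * t := by
    simp only [Finset.sum_add_distrib, Finset.sum_const, Finset.card_univ, Fintype.card_fin]; ring
  simp only [stdSimplex, Set.mem_ofPred_eq, Set.mem_Icc, hcoord, hsum]
  constructor
  · rintro ⟨t, ⟨ht0, ht1⟩, hnonneg, hone⟩
    exact ⟨by linarith, by linarith, fun i => by linarith [hnonneg i]⟩
  · rintro ⟨h1, h2, h3⟩
    exact ⟨(1 - ∑ i, y i) / 2, ⟨by linarith, by linarith⟩, fun i => by linarith [h3 i], by ring⟩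

theorem mem_smul_examplePolytope_iff {m : ℝ} (hm : 0 < m) (x : Fin 6 → ℝ) :
    x ∈ m • examplePolytope ↔ -m ≤ ∑ i, x i ∧ ∑ i, x i ≤ m ∧ ∀ i, ∑ j, x j ≤ 6 * x i + m := by
  rw [Set.mem_smul_set_iff_inv_smul_mem₀ hm.ne', mem_examplePolytope_iff]
  simp only [Pi.smul_apply, smul_eq_mul, ← Finset.mul_sum]
  field_simp

def latticePoint (p : (Fin 6 → ℤ) × ℕ) : Fin 6 → ℚ := fun i => p.1 i + p.2 / 3

theorem mem_exampleLattice_iff (w : Fin 6 → ℚ) :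
    w ∈ exampleLattice ↔ ∃ p : (Fin 6 → ℤ) × ℕ, p.2 < 3 ∧ latticePoint p = w := by
  rw [exampleLattice, AddSubgroup.mem_closure_range_single_one_union_singleton_iff]
  constructor
  · rintro ⟨z, r, rfl⟩
    refine ⟨(fun i => z i + r / 3, (r % 3).toNat), by omega, ?_⟩
    have hr : ((r % 3).toNat : ℚ) + 3 * ((r / 3 : ℤ) : ℚ) = r := by
      rw [← Int.cast_natCast, Int.toNat_of_nonneg (by omega)]
      exact_mod_cast Int.emod_add_mul_ediv r 3
    ext i
    simp only [latticePoint, Pi.add_apply, Pi.smul_apply, Int.cast_add]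
    simp only [zsmul_eq_mul]
    linear_combination hr / 3
  · rintro ⟨⟨z, r⟩, -, rfl⟩
    exact ⟨z, r, by ext; simp [latticePoint, div_eq_mul_inv]⟩

theorem latticePoint_injOn : Set.InjOn latticePoint {p | p.2 < 3} := by
  rintro ⟨z, r⟩ (hr : r < 3) ⟨z', r'⟩ (hr' : r' < 3) h
  have hcoord (i : Fin 6) : 3 * z i + (r : ℤ) = 3 * z' i + r' := by
    have := congrFun h i
    simp only [latticePoint] at this
    exact_mod_cast (by linear_combination 3 * this : (3 * z i + r : ℚ) = 3 * z' i + r')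
  have hrr : r = r' := by have := hcoord 0; omega
  subst hrr
  simp only [Prod.mk.injEq, and_true]
  ext i
  have := hcoord i
  omega

theorem latticePoint_mem_smul_examplePolytope_iff {m : ℕ} (hm : 0 < m)
    (p : (Fin 6 → ℤ) × ℕ) :
    (fun i => (latticePoint p i : ℝ)) ∈ (m : ℝ) • examplePolytope ↔
      -(m : ℤ) ≤ ∑ i, p.1 i + 2 * p.2 ∧ ∑ i, p.1 i + 2 * p.2 ≤ m ∧
        ∀ i, ∑ j, p.1 j ≤ 6 * p.1 i + m := by
  rw [mem_smul_examplePolytope_iff (by exact_mod_cast hm)]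
  have hsum : ∑ i, (latticePoint p i : ℝ) = ∑ i, (p.1 i : ℝ) + 2 * p.2 := by
    simp only [latticePoint, Rat.cast_add, Rat.cast_intCast, Rat.cast_div, Rat.cast_natCast,
      Finset.sum_add_distrib, Finset.sum_const, Finset.card_univ, Fintype.card_fin]
    push_cast; ring
  simp only [hsum]
  simp only [latticePoint, ← Int.cast_le (R := ℝ)]
  push_cast
  constructor <;> rintro ⟨h1, h2, h3⟩ <;> exact ⟨h1, h2, fun i => by linarith [h3 i]⟩

def latticeParams (m : ℕ) : Set ((Fin 6 → ℤ) × ℕ) :=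
  {p | p.2 < 3 ∧ -(m : ℤ) ≤ ∑ i, p.1 i + 2 * p.2 ∧ ∑ i, p.1 i + 2 * p.2 ≤ m ∧
    ∀ i, ∑ j, p.1 j ≤ 6 * p.1 i + m}

theorem latticePoints_eq_image {m : ℕ} (hm : 0 < m) :
    {w | w ∈ exampleLattice ∧ (fun i => (w i : ℝ)) ∈ (m : ℝ) • examplePolytope} =
      latticePoint '' latticeParams m := by
  ext w
  simp only [Set.mem_ofPred_eq, mem_exampleLattice_iff, Set.mem_image]
  constructor
  · rintro ⟨⟨p, hp, rfl⟩, hw⟩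
    exact ⟨p, ⟨hp, (latticePoint_mem_smul_examplePolytope_iff hm p).1 hw⟩, rfl⟩
  · rintro ⟨p, ⟨hp, hineq⟩, rfl⟩
    exact ⟨⟨p, hp, rfl⟩, (latticePoint_mem_smul_examplePolytope_iff hm p).2 hineq⟩

/-- `⟨n, v⟩` records `n = ∑ i, v i`, so that the tuples `v` are enumerated slice by slice by
`Finset.Nat.antidiagonalTuple` rather than by filtering a box, which keeps the count computable
in the kernel. -/
def latticeModel (m : ℕ) : Finset ((Σ _ : ℕ, Fin 6 → ℕ) × ℕ) :=
  (((Finset.range (7 + m)).sigma fun n => Finset.Nat.antidiagonalTuple 6 n) ×ˢ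
      Finset.range 3).filter
    fun q => 6 ≤ q.1.1 + m + 2 * q.2 ∧ q.1.1 + 2 * q.2 ≤ 6 + m ∧ ∀ i, q.1.1 ≤ 6 * q.1.2 i + m

theorem mem_latticeModel {m : ℕ} {n r : ℕ} {v : Fin 6 → ℕ} :
    (⟨n, v⟩, r) ∈ latticeModel m ↔ ∑ i, v i = n ∧ r < 3 ∧
      6 ≤ n + m + 2 * r ∧ n + 2 * r ≤ 6 + m ∧ ∀ i, n ≤ 6 * v i + m := by
  simp only [latticeModel, Finset.mem_filter, Finset.mem_product, Finset.mem_sigma,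
    Finset.mem_range, Finset.Nat.mem_antidiagonalTuple]
  constructor
  · rintro ⟨⟨⟨-, hsum⟩, hr⟩, hineq⟩
    exact ⟨hsum, hr, hineq⟩
  · rintro ⟨hsum, hr, h1, h2, h3⟩
    exact ⟨⟨⟨by omega, hsum⟩, hr⟩, h1, h2, h3⟩

def latticeModelShift (q : (Σ _ : ℕ, Fin 6 → ℕ) × ℕ) : (Fin 6 → ℤ) × ℕ :=
  (fun i => q.1.2 i - 1, q.2)

theorem latticeParams_eq_image {m : ℕ} (hm : m ≤ 3) :
    latticeParams m = latticeModelShift '' latticeModel m := by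
  ext ⟨z, r⟩
  simp only [latticeParams, Set.mem_ofPred_eq, Set.mem_image, Finset.mem_coe]
  constructor
  · rintro ⟨hr, h1, h2, h3⟩
    have hz (i : Fin 6) : -1 ≤ z i := by have := h3 i; omega
    let v : Fin 6 → ℕ := fun i => (z i + 1).toNat
    have hv (i : Fin 6) : (v i : ℤ) = z i + 1 := Int.toNat_of_nonneg (by linarith [hz i])
    have hsum : ((∑ i, v i : ℕ) : ℤ) = ∑ i, z i + 6 := by
      push_cast; simp [hv, Finset.sum_add_distrib]
    refine ⟨(⟨∑ i, v i, v⟩, r), mem_latticeModel.2 ⟨rfl, hr, by omega, by omega, fun i => ?_⟩, ?_⟩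
    · have := h3 i; have := hv i; omega
    · simp only [latticeModelShift, Prod.mk.injEq, and_true]
      ext i; rw [hv]; ring
  · rintro ⟨⟨⟨n, v⟩, r⟩, hq, hzr⟩
    obtain ⟨rfl, hr, h1, h2, h3⟩ := mem_latticeModel.1 hq
    simp only [latticeModelShift, Prod.mk.injEq] at hzr
    obtain ⟨rfl, rfl⟩ := hzr
    have hsum : ∑ i, ((v i : ℤ) - 1) = ((∑ i, v i : ℕ) : ℤ) - 6 := by
      simp [Finset.sum_sub_distrib]
    simp only [hsum]
    exact ⟨hr, by omega, by omega, fun i => by have := h3 i; omega⟩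

theorem latticeModelShift_injOn (m : ℕ) :
    Set.InjOn latticeModelShift (latticeModel m) := by
  rintro ⟨⟨n, v⟩, r⟩ hq ⟨⟨n', v'⟩, r'⟩ hq' h
  obtain ⟨rfl, -⟩ := mem_latticeModel.1 hq
  obtain ⟨rfl, -⟩ := mem_latticeModel.1 hq'
  simp only [latticeModelShift, Prod.mk.injEq] at h
  obtain ⟨hv, rfl⟩ := h
  obtain rfl : v = v' := funext fun i => by simpa using congrFun hv i
  rfl

theorem ncard_latticePoints {m : ℕ} (hm : 0 < m) (hm3 : m ≤ 3) :
    {w | w ∈ exampleLattice ∧ (fun i => (w i : ℝ)) ∈ (m : ℝ) • examplePolytope}.ncard =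
      (latticeModel m).card := by
  rw [latticePoints_eq_image hm, (latticePoint_injOn.mono fun _ h => h.1).ncard_image,
    latticeParams_eq_image hm3, (latticeModelShift_injOn m).ncard_image, Set.ncard_coe_finset]

theorem card_latticeModel_two : (latticeModel 2).card = 78 := by decide +kernel

set_option maxRecDepth 100000 in
theorem card_latticeModel_three : (latticeModel 3).card = 314 := by decide +kernel

/-- Let `f = (1/3,…,1/3) ∈ ℚ^6`, let `N = ℤ⟨e₁,…,e₆,f⟩ ⊆ ℚ^6`, and let
`P ⊆ ℝ^6` be the convex hull of `{e₁,…,e₆, e₁-f,…,e₆-f}`. Then `2P` contains exactly 78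
points of `N` and `3P` contains exactly 314 points of `N`. -/
theorem stmt_9 (f : Fin 6 → ℚ) (hf : f = fun _ => 1 / 3)
    (N : AddSubgroup (Fin 6 → ℚ))
    (hN : N = AddSubgroup.closure
      (Set.range (fun j : Fin 6 => Pi.single j (1 : ℚ)) ∪ {f}))
    (V : Set (Fin 6 → ℚ))
    (hV : V = Set.range (fun j : Fin 6 => Pi.single j (1 : ℚ)) ∪
      Set.range (fun j : Fin 6 => Pi.single j (1 : ℚ) - f))
    (P : Set (Fin 6 → ℝ))
    (hP : P = convexHull ℝ ((fun q : Fin 6 → ℚ => fun i => (q i : ℝ)) '' V)) :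
    Set.ncard {w : Fin 6 → ℚ | w ∈ N ∧ (fun i => (w i : ℝ)) ∈ (2 : ℝ) • P} = 78 ∧
    Set.ncard {w : Fin 6 → ℚ | w ∈ N ∧ (fun i => (w i : ℝ)) ∈ (3 : ℝ) • P} = 314 := by
  subst hf hN hV hP
  have h2 := ncard_latticePoints (m := 2) (by norm_num) (by norm_num)
  have h3 := ncard_latticePoints (m := 3) (by norm_num) (by norm_num)
  rw [Nat.cast_ofNat, card_latticeModel_two] at h2
  rw [Nat.cast_ofNat, card_latticeModel_three] at h3
  exact ⟨h2, h3⟩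
end

section
/- Let m ≥ 1 be an integer, let f = (1/m, …, 1/m) ∈ ℚ^{2m}, let N ⊆ ℚ^{2m} be the subgroup generated by the standard basis vectors e_1, …, e_{2m} and f, and let P ⊆ ℝ^{2m} be the convex hull of {e_1, …, e_{2m}, e_1 − f, …, e_{2m} − f}. Then P is reflexive with respect to N: 0 lies in the interior of P, all vertices of P lie in N, and the polar P° = {y ∈ ℝ^{2m} : ⟨x, y⟩ ≤ 1 for all x ∈ P} is the convex hull of a finite subset of the dual lattice M = {u ∈ ℚ^{2m} : ⟨u, v⟩ ∈ ℤ for all v ∈ N}. -/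
/-!
Write `n = 2m` and `c = 1/m`, so that `n * c = 2`. The polar of `conv {e_j, e_j - c𝟙}` is the
polyhedron `y_j ≤ 1, y_j - c ∑ y ≤ 1`. Because `n * c = 2`, this polyhedron is the convex hull of
`𝟙`, `-𝟙` and `𝟙 - n e_i`: one writes a point explicitly as a convex combination of them, and the
sign of `∑ y` decides whether `𝟙` or `-𝟙` carries the extra weight. These vertices have integer
coordinates and coordinate sums `2m`, `-2m` or `0`, so they pair integrally with each `e_j` and with
`c𝟙`, hence with all of `N`. Finally, every point of the sup-norm ball of radius `1/(2n)` is a convex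
combination of the `e_j` and `e_j - c𝟙`, so `0` lies in the interior.
-/

open Matrix

variable (ι : Type*) [DecidableEq ι]

def unitVectorsAndShifts {K : Type*} [Ring K] (c : K) : Set (ι → K) :=
  Set.range (fun j => Pi.single j 1) ∪ Set.range (fun j => Pi.single j 1 - fun _ => c)

def dualVertices [Fintype ι] {K : Type*} [Ring K] [DecidableEq K] (n : K) : Finset (ι → K) :=
  {1, -1} ∪ Finset.univ.image (fun i => 1 - Pi.single i n)

variable {ι}

section Image

variable {K L : Type*} [Ring K] [Ring L] (φ : K →+* L)

lemma compLeft_single (j : ι) (x : K) : φ.compLeft ι (Pi.single j x) = Pi.single j (φ x) :=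
  (Pi.single_op (fun _ => φ) (fun _ => map_zero φ) j x).symm

lemma image_unitVectorsAndShifts (c : K) :
    (fun q i => φ (q i)) '' unitVectorsAndShifts ι c = unitVectorsAndShifts ι (φ c) := by
  change φ.compLeft ι '' _ = _
  simp only [unitVectorsAndShifts, Set.image_union, ← Set.range_comp, Function.comp_def,
    map_sub, compLeft_single, map_one]
  rfl

lemma image_dualVertices [Fintype ι] [DecidableEq K] [DecidableEq L] (n : K) :
    (fun q i => φ (q i)) '' (dualVertices ι n : Set (ι → K)) =
      (dualVertices ι (φ n) : Set (ι → L)) := by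
  change φ.compLeft ι '' _ = _
  simp only [dualVertices, Finset.coe_union, Finset.coe_insert, Finset.coe_singleton,
    Finset.coe_image, Finset.coe_univ, Set.image_univ, Set.image_union, Set.image_insert_eq,
    Set.image_singleton, ← Set.range_comp, Function.comp_def, map_one, map_neg, map_sub,
    compLeft_single]

end Image

variable [Fintype ι]

omit [DecidableEq ι] in
lemma polar_convexHull (s : Set (ι → ℝ)) :
    {y | ∀ x ∈ convexHull ℝ s, x ⬝ᵥ y ≤ 1} = {y | ∀ x ∈ s, x ⬝ᵥ y ≤ 1} := by
  refine subset_antisymm (fun y hy x hx => hy x (subset_convexHull ℝ s hx)) fun y hy => ?_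
  have hconv : Convex ℝ {x : ι → ℝ | x ⬝ᵥ y ≤ 1} :=
    convex_halfSpace_le ((dotProductBilin ℝ ℝ).flip y).isLinear 1
  exact fun x hx => convexHull_min hy hconv hx

omit [DecidableEq ι] in
lemma convex_polar (s : Set (ι → ℝ)) : Convex ℝ {y | ∀ x ∈ s, x ⬝ᵥ y ≤ 1} := by
  simp only [Set.ofPred_forall]
  exact convex_iInter₂ fun x _ => convex_halfSpace_le (dotProductBilin ℝ ℝ x).isLinear 1

lemma polar_unitVectorsAndShifts (c : ℝ) :
    {y | ∀ x ∈ unitVectorsAndShifts ι c, x ⬝ᵥ y ≤ 1} =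
      {y | ∀ j, y j ≤ 1 ∧ y j - c * ∑ i, y i ≤ 1} := by
  have hshift (j : ι) (y : ι → ℝ) :
      (Pi.single j 1 - fun _ => c) ⬝ᵥ y = y j - c * ∑ i, y i := by
    rw [sub_dotProduct, single_dotProduct, one_mul]
    simp [dotProduct, Finset.mul_sum]
  ext y
  simp only [unitVectorsAndShifts, Set.mem_ofPred_eq, Set.mem_union, or_imp, forall_and,
    Set.forall_mem_range, single_dotProduct, one_mul, hshift]

lemma ball_subset_convexHull_unitVectorsAndShifts [Nonempty ι] :
    Metric.ball 0 (1 / (2 * Fintype.card ι)) ⊆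
      convexHull ℝ (unitVectorsAndShifts ι (2 / (Fintype.card ι : ℝ))) := by
  intro y hy
  have hn : (0 : ℝ) < Fintype.card ι := by positivity
  have hy' : ∀ i, |y i| < 1 / (2 * Fintype.card ι) := by
    simpa [Real.norm_eq_abs] using (pi_norm_lt_iff (by positivity)).1 (mem_ball_zero_iff.1 hy)
  set s := ∑ i, y i
  have hs : |s| ≤ 1 / 2 := calc
    |s| ≤ ∑ i, |y i| := Finset.abs_sum_le_sum_abs _ _
    _ ≤ ∑ _i : ι, 1 / (2 * (Fintype.card ι : ℝ)) := Finset.sum_le_sum fun i _ => (hy' i).le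
    _ = 1 / 2 := by
      simp only [Finset.sum_const, Finset.card_univ, nsmul_eq_mul]; field_simp
  set A := (1 + s) / 2
  set B := (1 - s) / 2
  set t : ι → ℝ := fun j => y j + (1 - s) / Fintype.card ι
  have ht : ∀ j, 0 ≤ t j := by
    intro j
    have h1 := (abs_lt.1 (hy' j)).1
    have h2 : 1 / (2 * (Fintype.card ι : ℝ)) ≤ (1 - s) / Fintype.card ι := by
      rw [div_le_div_iff₀ (by positivity) hn]; nlinarith [(abs_le.1 hs).2]
    simp only [t]; linarith
  have hsum : ∑ j, t j = 1 := by
    simp only [t, Finset.sum_add_distrib, Finset.sum_const, Finset.card_univ, nsmul_eq_mul]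
    field_simp; ring
  have hdecomp : ∑ j, t j • (A • Pi.single j 1 +
      B • (Pi.single j 1 - fun _ => 2 / (Fintype.card ι : ℝ))) = y := by
    funext k
    simp only [Finset.sum_apply, Pi.smul_apply, Pi.add_apply, Pi.sub_apply, smul_eq_mul,
      Pi.single_apply, mul_sub, mul_add, mul_ite, mul_one, mul_zero, Finset.sum_add_distrib,
      Finset.sum_sub_distrib, Finset.sum_ite_eq, Finset.mem_univ, if_true]
    rw [← Finset.sum_mul, hsum]
    simp only [t, A, B]
    field_simp
    ring
  rw [← hdecomp]
  refine (convex_convexHull ℝ _).sum_mem (fun j _ => ht j) hsum fun j _ => ?_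
  exact convex_convexHull ℝ _ (subset_convexHull ℝ (unitVectorsAndShifts ι _) (Or.inl ⟨j, rfl⟩))
    (subset_convexHull ℝ (unitVectorsAndShifts ι _) (Or.inr ⟨j, rfl⟩))
    (by simp only [A]; linarith [(abs_le.1 hs).1]) (by simp only [B]; linarith [(abs_le.1 hs).2])
    (by ring)

lemma zero_mem_interior_convexHull_unitVectorsAndShifts [Nonempty ι] :
    0 ∈ interior (convexHull ℝ (unitVectorsAndShifts ι (2 / (Fintype.card ι : ℝ)))) :=
  mem_interior_iff_mem_nhds.2 (Filter.mem_of_superset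
    (Metric.ball_mem_nhds 0 (by positivity)) ball_subset_convexHull_unitVectorsAndShifts)

lemma sum_one_sub_single {K : Type*} [Ring K] (i : ι) (n : K) :
    ∑ j, (1 - Pi.single i n : ι → K) j = Fintype.card ι - n := by
  simp [Finset.sum_sub_distrib]

lemma dualVertices_subset [Nonempty ι] :
    (dualVertices ι (Fintype.card ι : ℝ) : Set (ι → ℝ)) ⊆
      {y | ∀ j, y j ≤ 1 ∧ y j - 2 / (Fintype.card ι : ℝ) * ∑ i, y i ≤ 1} := by
  have hn : (Fintype.card ι : ℝ) ≠ 0 := by positivity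
  intro y hy j
  simp only [dualVertices, Finset.coe_union, Finset.coe_insert, Finset.coe_singleton,
    Finset.coe_image, Finset.coe_univ, Set.image_univ, Set.mem_union, Set.mem_insert_iff,
    Set.mem_singleton_iff, Set.mem_range] at hy
  rcases hy with (rfl | rfl) | ⟨i, rfl⟩
  · simp [hn]
  · simp [hn]; norm_num
  · rw [sum_one_sub_single, sub_self, mul_zero, sub_zero, and_self]
    by_cases h : j = i
    · subst h; simp
    · simp [h]

lemma mem_convexHull_dualVertices_of_le [Nonempty ι] {y : ι → ℝ} {b : ℝ} (hb : 0 ≤ b)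
    (ha : 0 ≤ b + (∑ i, y i) / Fintype.card ι) (hy : ∀ k, y k ≤ 1 - 2 * b) :
    y ∈ convexHull ℝ (dualVertices ι (Fintype.card ι : ℝ) : Set (ι → ℝ)) := by
  set n : ℝ := (Fintype.card ι : ℝ)
  have hn : n ≠ 0 := by positivity
  set a := b + (∑ i, y i) / n
  set w : Option (Option ι) → ℝ :=
    fun o => o.elim a fun o' => o'.elim b fun k => (1 - 2 * b - y k) / n
  set z : Option (Option ι) → ι → ℝ :=
    fun o => o.elim 1 fun o' => o'.elim (-1) fun k => 1 - Pi.single k n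
  have hsum : ∑ o, w o • z o = y := by
    funext j
    simp only [w, z, Fintype.sum_option, Option.elim, Finset.sum_apply, Pi.smul_apply,
      smul_eq_mul, Pi.sub_apply, Pi.one_apply, Pi.neg_apply, Pi.single_apply, mul_sub, mul_one,
      mul_ite, mul_zero, Finset.sum_sub_distrib, Finset.sum_ite_eq, Finset.mem_univ, if_true,
      ← Finset.sum_div]
    simp only [Finset.sum_const, Finset.card_univ, nsmul_eq_mul, a, n]
    field_simp
    ring
  rw [← hsum]
  refine (convex_convexHull ℝ _).sum_mem (fun o _ => ?_) ?_ (fun o _ => subset_convexHull ℝ _ ?_)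
  · rcases o with _ | _ | k
    · exact ha
    · exact hb
    · exact div_nonneg (by linarith [hy k]) (Nat.cast_nonneg _)
  · simp only [w, Fintype.sum_option, Option.elim, ← Finset.sum_div, Finset.sum_sub_distrib]
    simp only [Finset.sum_const, Finset.card_univ, nsmul_eq_mul, a, n]
    field_simp
    ring
  · rcases o with _ | _ | k <;> simp [z, dualVertices]

lemma convexHull_dualVertices [Nonempty ι] :
    convexHull ℝ (dualVertices ι (Fintype.card ι : ℝ) : Set (ι → ℝ)) =
      {y | ∀ j, y j ≤ 1 ∧ y j - 2 / (Fintype.card ι : ℝ) * ∑ i, y i ≤ 1} := by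
  have hn : (0 : ℝ) < Fintype.card ι := by positivity
  refine subset_antisymm (convexHull_min dualVertices_subset ?_) fun y hy => ?_
  · rw [← polar_unitVectorsAndShifts]; exact convex_polar _
  rcases le_or_gt 0 (∑ i, y i) with hs | hs
  · exact mem_convexHull_dualVertices_of_le le_rfl (by positivity) fun k => by
      linarith [(hy k).1]
  · refine mem_convexHull_dualVertices_of_le (b := -(∑ i, y i) / Fintype.card ι)
      (div_nonneg (by linarith) hn.le) (by rw [neg_div, neg_add_cancel]) fun k => ?_
    have := (hy k).2
    field_simp at this ⊢
    linarith

omit [DecidableEq ι] in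
lemma exists_int_dotProduct_of_mem_closure {R : Type*} [Ring R] {u : ι → R}
    {S : Set (ι → R)} (hS : ∀ w ∈ S, ∃ n : ℤ, u ⬝ᵥ w = n) {w : ι → R}
    (hw : w ∈ AddSubgroup.closure S) : ∃ n : ℤ, u ⬝ᵥ w = n := by
  let H : AddSubgroup (ι → R) :=
    (Int.castAddHom R).range.comap (AddMonoidHom.mk' (u ⬝ᵥ ·) (dotProduct_add u))
  have hSH : S ⊆ H := fun w hw => (hS w hw).imp fun _ hn => hn.symm
  obtain ⟨n, hn⟩ := (AddSubgroup.closure_le H).2 hSH hw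
  exact ⟨n, hn.symm⟩

lemma exists_int_dotProduct_dualVertices {m : ℕ} (hm : m ≠ 0) (hι : Fintype.card ι = 2 * m)
    {u : ι → ℚ} (hu : u ∈ dualVertices ι (Fintype.card ι : ℚ)) {w : ι → ℚ}
    (hw : w ∈ Set.range (fun j => Pi.single j 1) ∪ {fun _ => (m : ℚ)⁻¹}) :
    ∃ n : ℤ, u ⬝ᵥ w = n := by
  simp only [dualVertices, Finset.mem_union, Finset.mem_insert, Finset.mem_singleton,
    Finset.mem_image, Finset.mem_univ, true_and] at hu
  rcases hw with ⟨j, rfl⟩ | rfl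
  · rw [dotProduct_single, mul_one]
    rcases hu with (rfl | rfl) | ⟨i, rfl⟩
    · exact ⟨1, by simp⟩
    · exact ⟨-1, by simp⟩
    · by_cases h : j = i
      · exact ⟨1 - Fintype.card ι, by simp [h]⟩
      · exact ⟨1, by simp [h]⟩
  · have hconst (v : ι → ℚ) : v ⬝ᵥ (fun _ => (m : ℚ)⁻¹) = (∑ i, v i) * (m : ℚ)⁻¹ := by
      simp [dotProduct, Finset.sum_mul]
    rw [hconst]
    rcases hu with (rfl | rfl) | ⟨i, rfl⟩
    · exact ⟨2, by simp [hι]; field_simp⟩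
    · exact ⟨-2, by simp [hι]; field_simp⟩
    · exact ⟨0, by simp⟩

/-- For `m ≥ 1`, let `f = (1/m,…,1/m) ∈ ℚ^{2m}`, let
`N = ℤ⟨e₁,…,e_{2m},f⟩ ⊆ ℚ^{2m}`, and let `P ⊆ ℝ^{2m}` be the convex hull of
`{e₁,…,e_{2m}, e₁-f,…,e_{2m}-f}`. Then `P` is reflexive with respect to `N`: `0` lies in
the interior of `P`, all vertices of `P` lie in `N`, and the polar `P°` is the convex hull
of a finite subset of the dual lattice `M`. -/
theorem stmt_12 (m : ℕ) (hm : 1 ≤ m) (f : Fin (2 * m) → ℚ)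
    (hf : f = fun _ => (m : ℚ)⁻¹)
    (N : AddSubgroup (Fin (2 * m) → ℚ))
    (hN : N = AddSubgroup.closure
      (Set.range (fun j : Fin (2 * m) => Pi.single j (1 : ℚ)) ∪ {f}))
    (V : Set (Fin (2 * m) → ℚ))
    (hV : V = Set.range (fun j : Fin (2 * m) => Pi.single j (1 : ℚ)) ∪
      Set.range (fun j : Fin (2 * m) => Pi.single j (1 : ℚ) - f))
    (P : Set (Fin (2 * m) → ℝ))
    (hP : P = convexHull ℝ ((fun q : Fin (2 * m) → ℚ => fun i => (q i : ℝ)) '' V)) :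
    (0 : Fin (2 * m) → ℝ) ∈ interior P ∧
    V ⊆ (N : Set (Fin (2 * m) → ℚ)) ∧
    ∃ T : Finset (Fin (2 * m) → ℚ),
      (∀ u ∈ T, ∀ w ∈ N, ∃ n : ℤ, ∑ i, u i * w i = (n : ℚ)) ∧
      {y : Fin (2 * m) → ℝ | ∀ x ∈ P, ∑ i, x i * y i ≤ 1} =
        convexHull ℝ ((fun q : Fin (2 * m) → ℚ => fun i => (q i : ℝ)) ''
          (T : Set (Fin (2 * m) → ℚ))) := by
  subst hf hN hP
  obtain rfl : V = unitVectorsAndShifts (Fin (2 * m)) (m : ℚ)⁻¹ := hV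
  have : Nonempty (Fin (2 * m)) := ⟨⟨0, by omega⟩⟩
  have hV : (fun q i => (q i : ℝ)) '' unitVectorsAndShifts (Fin (2 * m)) (m : ℚ)⁻¹ =
      unitVectorsAndShifts _ (2 / (Fintype.card (Fin (2 * m)) : ℝ)) := by
    have hc : (m : ℝ)⁻¹ = 2 / (Fintype.card (Fin (2 * m)) : ℝ) := by
      rw [Fintype.card_fin, Nat.cast_mul, Nat.cast_two, div_mul_cancel_left₀ two_ne_zero]
    simpa [hc] using image_unitVectorsAndShifts (Rat.castHom ℝ) (m : ℚ)⁻¹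
  have hT : (fun q i => (q i : ℝ)) ''
      (dualVertices (Fin (2 * m)) ((Fintype.card (Fin (2 * m)) : ℚ)) : Set (Fin (2 * m) → ℚ)) =
        dualVertices (Fin (2 * m)) ((Fintype.card (Fin (2 * m)) : ℝ)) := by
    simpa using image_dualVertices (Rat.castHom ℝ) ((Fintype.card (Fin (2 * m)) : ℚ))
  refine ⟨?_, ?_, dualVertices _ ((Fintype.card (Fin (2 * m)) : ℚ)), fun u hu w hw => ?_, ?_⟩
  · rw [hV]; exact zero_mem_interior_convexHull_unitVectorsAndShifts
  · rintro _ (⟨j, rfl⟩ | ⟨j, rfl⟩)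
    · exact AddSubgroup.subset_closure (Or.inl ⟨j, rfl⟩)
    · exact sub_mem (AddSubgroup.subset_closure (Or.inl ⟨j, rfl⟩))
        (AddSubgroup.subset_closure (Or.inr rfl))
  · exact exists_int_dotProduct_of_mem_closure
      (fun w hw => exists_int_dotProduct_dualVertices (by omega) (Fintype.card_fin _) hu hw) hw
  · change {y | ∀ x ∈ _, x ⬝ᵥ y ≤ 1} = _
    rw [hV, hT, polar_convexHull, polar_unitVectorsAndShifts, convexHull_dualVertices]
end
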